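/- arXiv:1602.04383 — 2 statements merged into one kernel-verified Lean document; each statement's English description precedes it below -/
import Mathlib

section
/- Let V″ be an isotropic F-subspace of V (i.e., (V″, V″) = 0), say of dimension s, and let L = (L_i)_{i∈ℤ} ∈ X^c_{n,d}. Then there exist F-subspaces T and W of V such that: (1) V = V″ ⊕ T ⊕ W and (V″)^⊥ = V″ ⊕ T, where (V″)^⊥ = {v ∈ V : (v, x) = 0 for all x ∈ V″}; (2) W is isotropic and (T, W) = 0; (3) there exist F-bases (z_1, …, z_s) of V″ and (w_1, …, w_s) of W such that (z_i, w_j) = δ_{ij} for all i, j; (4) L_i = (L_i ∩ V″) ⊕ (L_i ∩ T) ⊕ (L_i ∩ W) for every i ∈ ℤ. -/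
/-!
Induction on `dim V″`, splitting off one hyperbolic plane at a time.  For `z ≠ 0` in `V″` let
`a i` be the largest integer with `ε^(-a i) z ∈ L i`.  Then `a` is monotone with
`a (i + n) = a i + 1`, so it jumps at some `j₀`; the vector `ε^(-a j₀) z` is primitive in `L j₀`,
and self-duality `L j₀ = (L (-j₀-1))^#` gives `w₀ ∈ L (-j₀-1)` pairing to `1` with it.  The
rescaled partner `w = ε^(-a j₀) w₀` satisfies `ε^(a j) w ∈ L (-j-1)` for every `j`, which is exactly
what makes the rank-one maps `x ↦ (x, w) z` and `x ↦ (z, x) w` preserve every `L i`.  Hence the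
chain `L i ∩ ⟨z, w⟩^⊥` is again self-dual inside `⟨z, w⟩^⊥`, and the induction yields dual families
`(z_j)`, `(w_j)` whose rank-one maps all preserve the lattices; finally `W = span (w_j)` and
`T = (V″ ⊕ W)^⊥`.
-/

open scoped Classical

noncomputable section

namespace AffLat

variable (k : Type*) [Field k]

/-- The uniformizer `ε ∈ F = k((ε))`. -/
def eps : LaurentSeries k := algebraMap (PowerSeries k) (LaurentSeries k) PowerSeries.X

/-- The subring `𝔬 = k[[ε]]` of `F = k((ε))`. -/
def oring : Subring (LaurentSeries k) :=
  (algebraMap (PowerSeries k) (LaurentSeries k)).range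

variable {k}
variable {V : Type*} [AddCommGroup V] [Module (LaurentSeries k) V]
  [Module (PowerSeries k) V] [IsScalarTower (PowerSeries k) (LaurentSeries k) V]

/-- A lattice in `V`: a finitely generated `𝔬`-submodule `L` with `F·L = V`. -/
def IsLat (L : Submodule (PowerSeries k) V) : Prop :=
  L.FG ∧ Submodule.span (LaurentSeries k) (L : Set V) = ⊤

/-- The dual `L^# = {v ∈ V | ∀ x ∈ L, (v, x) ∈ 𝔬}` of an `𝔬`-submodule `L` with respect to a
bilinear form `Φ`. -/
def sharp (Φ : V →ₗ[LaurentSeries k] V →ₗ[LaurentSeries k] LaurentSeries k)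
    (L : Submodule (PowerSeries k) V) : Submodule (PowerSeries k) V where
  carrier := {v | ∀ x ∈ L, Φ v x ∈ oring k}
  zero_mem' := fun x _ => by rw [map_zero, LinearMap.zero_apply]; exact zero_mem _
  add_mem' := fun {a b} ha hb x hx => by
    rw [map_add, LinearMap.add_apply]; exact add_mem (ha x hx) (hb x hx)
  smul_mem' := fun c v hv x hx => by
    rw [← algebraMap_smul (LaurentSeries k) c v, map_smul, LinearMap.smul_apply, smul_eq_mul]
    exact mul_mem ⟨c, rfl⟩ (hv x hx)

/-- The `𝔬`-submodule `a • L` for a scalar `a ∈ F`. -/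
def esmul (a : LaurentSeries k) (L : Submodule (PowerSeries k) V) :
    Submodule (PowerSeries k) V where
  carrier := (fun v => a • v) '' (L : Set V)
  zero_mem' := ⟨0, L.zero_mem, smul_zero a⟩
  add_mem' := by
    rintro x y ⟨x', hx', rfl⟩ ⟨y', hy', rfl⟩
    exact ⟨x' + y', L.add_mem hx' hy', smul_add a x' y'⟩
  smul_mem' := by
    rintro c x ⟨x', hx', rfl⟩
    refine ⟨c • x', L.smul_mem c hx', ?_⟩
    show a • (c • x') = c • (a • x')
    rw [← algebraMap_smul (LaurentSeries k) c x', ← algebraMap_smul (LaurentSeries k) c (a • x'),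
      smul_smul, smul_smul, mul_comm]

/-- The quotient `p / s` of an `𝔬`-submodule `p` by the `𝔬`-submodule `s ∩ p`. -/
abbrev relQ (p s : Submodule (PowerSeries k) V) : Type _ :=
  ↥p ⧸ (s.comap p.subtype)

/-- The dimension over `k` of an `𝔬`-module (with the `k`-action coming from
`k → 𝔬 = k[[ε]]`). -/
def kdim (k : Type*) [Field k] (Q : Type*) [AddCommGroup Q] [Module (PowerSeries k) Q] : ℕ :=
  @Module.finrank k Q _ _ (Module.compHom Q (PowerSeries.C (R := k)))

/-- Finite-dimensionality over `k` of an `𝔬`-module (with the `k`-action coming from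
`k → 𝔬 = k[[ε]]`). -/
def kfinite (k : Type*) [Field k] (Q : Type*) [AddCommGroup Q] [Module (PowerSeries k) Q] :
    Prop :=
  @FiniteDimensional k Q _ _ (Module.compHom Q (PowerSeries.C (R := k)))

end AffLat

namespace AffLat

variable {k : Type*} [Field k]
variable {V : Type*} [AddCommGroup V] [Module (LaurentSeries k) V]
  [Module (PowerSeries k) V] [IsScalarTower (PowerSeries k) (LaurentSeries k) V]

/-- The orthogonal complement `{v | ∀ x ∈ N, Φ v x = 0}` of an `F`-subspace. -/
def perpF (Φ : V →ₗ[LaurentSeries k] V →ₗ[LaurentSeries k] LaurentSeries k)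
    (N : Submodule (LaurentSeries k) V) : Submodule (LaurentSeries k) V where
  carrier := {v | ∀ x ∈ N, Φ v x = 0}
  zero_mem' := fun x _ => by rw [map_zero, LinearMap.zero_apply]
  add_mem' := fun {a b} ha hb x hx => by
    rw [map_add, LinearMap.add_apply, ha x hx, hb x hx, add_zero]
  smul_mem' := fun c v hv x hx => by
    rw [map_smul, LinearMap.smul_apply, hv x hx, smul_zero]

/-- The set `X^c_{n,d}`: `n`-periodic self-dual chains of lattices, i.e. `L i ⊆ L (i+1)`,
`L i = ε L (i+n)` and `(L i)^# = L (-i-1)` for all `i ∈ ℤ`. -/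
def IsXc (Φ : V →ₗ[LaurentSeries k] V →ₗ[LaurentSeries k] LaurentSeries k)
    (n : ℕ) (L : ℤ → Submodule (PowerSeries k) V) : Prop :=
  (∀ i : ℤ, IsLat (L i)) ∧
  (∀ i : ℤ, L i ≤ L (i + 1)) ∧
  (∀ i : ℤ, ∀ v : V, v ∈ L i ↔ ∃ w ∈ L (i + n), v = eps k • w) ∧
  (∀ i : ℤ, sharp Φ (L i) = L (-i - 1))

end AffLat

lemma Submodule.finrank_inf_ker_add_one {K V : Type*} [Field K] [AddCommGroup V] [Module K V]
    [FiniteDimensional K V] {N : Submodule K V} {f : V →ₗ[K] K} {z : V} (hz : z ∈ N)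
    (hfz : f z ≠ 0) : Module.finrank K ↥(N ⊓ LinearMap.ker f) + 1 = Module.finrank K N := by
  have hf : f ∘ₗ N.subtype ≠ 0 := fun h => hfz (by simpa using LinearMap.congr_fun h ⟨z, hz⟩)
  rw [← Module.Dual.finrank_ker_add_one_of_ne_zero hf, LinearMap.ker_comp,
    ← Submodule.map_comap_subtype,
    (Submodule.equivMapOfInjective _ N.injective_subtype _).finrank_eq.symm]

lemma Submodule.sum_smul_mem_span_range {R M ι : Type*} [Semiring R] [AddCommMonoid M]
    [Module R M] [Fintype ι] (c : ι → R) (v : ι → M) :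
    ∑ j, c j • v j ∈ Submodule.span R (Set.range v) :=
  (Submodule.mem_span_range_iff_exists_fun R).2 ⟨c, rfl⟩

lemma exists_forall_sub_le_mul {a : ℤ → ℤ} {n : ℕ} (hn : 0 < n) (hmono : Monotone a)
    (hper : ∀ i t, a (i + t * n) = a i + t) : ∃ j₀, ∀ j, j - j₀ ≤ (a j - a j₀) * n := by
  obtain ⟨j₀, hj₀⟩ : ∃ j₀, a j₀ < a (j₀ + 1) := by
    by_contra! h
    have hanti := antitone_int_of_succ_le h (show (0 : ℤ) ≤ 0 + 1 * n by positivity)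
    rw [hper 0 1] at hanti
    omega
  refine ⟨j₀, fun j => ?_⟩
  have hn' : (0 : ℤ) < n := by exact_mod_cast hn
  set t := (j - j₀ - 1) / n
  have h1 : j₀ + 1 + t * n ≤ j := by linarith [Int.ediv_mul_le (j - j₀ - 1) hn'.ne']
  have h2 : j - j₀ - 1 < (t + 1) * n := Int.lt_ediv_add_one_mul_self _ hn'
  have h3 : a (j₀ + 1) + t ≤ a j := hper (j₀ + 1) t ▸ hmono h1
  nlinarith

namespace AffLat

open WithZero

variable {k : Type*} [Field k]

lemma eps_eq_single : eps k = HahnSeries.single 1 1 := by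
  simp [eps, LaurentSeries.coe_algebraMap]

lemma eps_ne_zero : eps k ≠ 0 := by
  simp [eps_eq_single]

lemma mem_oring_iff_valuation_le_one (c : LaurentSeries k) : c ∈ oring k ↔ Valued.v c ≤ 1 := by
  rw [LaurentSeries.val_le_one_iff_eq_coe]
  simp [oring, LaurentSeries.coe_algebraMap, eq_comm]

lemma valuation_eps_zpow (m : ℤ) : Valued.v (eps k ^ m) = exp (-m) := by
  rw [map_zpow₀, eps_eq_single, LaurentSeries.valuation_single_zpow, ← exp_zsmul]
  simp

lemma eps_zpow_mul_mem_oring_iff {c : LaurentSeries k} (hc : c ≠ 0) (m : ℤ) :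
    eps k ^ m * c ∈ oring k ↔ log (Valued.v c) ≤ m := by
  have hv : Valued.v c ≠ 0 := by simpa using hc
  rw [mem_oring_iff_valuation_le_one, map_mul, valuation_eps_zpow, log_le_iff_le_exp hv,
    ← exp_log hv, exp_le_exp, ← exp_add, ← exp_zero, exp_le_exp]
  omega

lemma eps_zpow_mem_oring {m : ℤ} (hm : 0 ≤ m) : eps k ^ m ∈ oring k := by
  simpa [hm] using (eps_zpow_mul_mem_oring_iff (one_ne_zero (α := LaurentSeries k)) m)

lemma exists_eps_zpow_mul_mem_oring (c : LaurentSeries k) : ∃ m : ℤ, eps k ^ m * c ∈ oring k := by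
  rcases eq_or_ne c 0 with rfl | hc
  · exact ⟨0, by simp [(oring k).zero_mem]⟩
  · exact ⟨_, (eps_zpow_mul_mem_oring_iff hc _).2 le_rfl⟩

lemma inv_mem_oring_of_eps_inv_mul_notMem {c : LaurentSeries k}
    (h : (eps k)⁻¹ * c ∉ oring k) : c ≠ 0 ∧ c⁻¹ ∈ oring k := by
  have hc : c ≠ 0 := by rintro rfl; simp [(oring k).zero_mem] at h
  refine ⟨hc, ?_⟩
  rw [← zpow_neg_one, eps_zpow_mul_mem_oring_iff hc] at h
  have := (eps_zpow_mul_mem_oring_iff (inv_ne_zero hc) 0).2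
  simp only [zpow_zero, one_mul, map_inv₀, log_inv] at this
  exact this (by omega)

variable {V : Type*} [AddCommGroup V] [Module (LaurentSeries k) V]
variable (Φ : V →ₗ[LaurentSeries k] V →ₗ[LaurentSeries k] LaurentSeries k)

lemma mem_perpF_span_iff {S : Set V} {v : V} :
    v ∈ perpF Φ (Submodule.span (LaurentSeries k) S) ↔ ∀ s ∈ S, Φ v s = 0 := by
  refine ⟨fun h s hs => h s (Submodule.subset_span hs), fun h x hx => ?_⟩
  have : Submodule.span (LaurentSeries k) S ≤ LinearMap.ker (Φ v) := Submodule.span_le.2 h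
  exact this hx

lemma mem_perpF_span_pair {z w v : V} :
    v ∈ perpF Φ (Submodule.span (LaurentSeries k) {z, w}) ↔ Φ v z = 0 ∧ Φ v w = 0 := by
  simp [mem_perpF_span_iff]

lemma isotropic_span {S : Set V} (h : ∀ x ∈ S, ∀ y ∈ S, Φ x y = 0) :
    ∀ x ∈ Submodule.span (LaurentSeries k) S, ∀ y ∈ Submodule.span (LaurentSeries k) S,
      Φ x y = 0 := by
  have : Submodule.span (LaurentSeries k) S ≤ perpF Φ (Submodule.span (LaurentSeries k) S) :=
    Submodule.span_le.2 fun x hx => (mem_perpF_span_iff Φ).2 (h x hx)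
  exact fun x hx => this hx

def perpProj (z w : V) : V →ₗ[LaurentSeries k] V :=
  LinearMap.id - (Φ.flip w).smulRight z - (Φ z).smulRight w

variable {Φ}

lemma perpProj_apply (z w x : V) : perpProj Φ z w x = x - Φ x w • z - Φ z x • w := rfl

section perpProj

variable {z w : V}

lemma apply_perpProj_right {v : V} (hv : v ∈ perpF Φ (Submodule.span (LaurentSeries k) {z, w}))
    (x : V) : Φ v (perpProj Φ z w x) = Φ v x := by
  rw [mem_perpF_span_pair] at hv
  simp [perpProj_apply, hv.1, hv.2]

lemma apply_perpProj_left (hΦ : Φ.IsAlt) {v : V}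
    (hv : v ∈ perpF Φ (Submodule.span (LaurentSeries k) {z, w})) (x : V) :
    Φ (perpProj Φ z w x) v = Φ x v := by
  rw [← hΦ.neg, apply_perpProj_right hv, hΦ.neg]

lemma perpProj_mem_perpF (hΦ : Φ.IsAlt) (hzw : Φ z w = 1) (x : V) :
    perpProj Φ z w x ∈ perpF Φ (Submodule.span (LaurentSeries k) {z, w}) := by
  rw [mem_perpF_span_pair]
  have hwz : Φ w z = -1 := by rw [← hΦ.neg, hzw]
  constructor
  · simp [perpProj_apply, hΦ.self_eq_zero, hwz, ← hΦ.neg x z]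
  · simp [perpProj_apply, hΦ.self_eq_zero, hzw]

lemma perpProj_eq_self (hΦ : Φ.IsAlt) {v : V}
    (hv : v ∈ perpF Φ (Submodule.span (LaurentSeries k) {z, w})) : perpProj Φ z w v = v := by
  rw [mem_perpF_span_pair] at hv
  have hzv : Φ z v = 0 := hΦ.eq_iff.1 hv.1
  simp [perpProj_apply, hv.2, hzv]

end perpProj

section HyperbolicFamily

variable {ι : Type*} [DecidableEq ι]

variable (Φ) in
structure IsHyperbolicFamily (z w : ι → V) : Prop where
  isotropic_left : ∀ i j, Φ (z i) (z j) = 0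
  isotropic_right : ∀ i j, Φ (w i) (w j) = 0
  apply_eq : ∀ i j, Φ (z i) (w j) = if i = j then 1 else 0

lemma linearIndependent_of_apply_eq_ite [Fintype ι] {W : Type*} [AddCommGroup W]
    [Module (LaurentSeries k) W] (B : V →ₗ[LaurentSeries k] W →ₗ[LaurentSeries k] LaurentSeries k)
    {z : ι → V} {w : ι → W} (h : ∀ i j, B (z i) (w j) = if i = j then 1 else 0) :
    LinearIndependent (LaurentSeries k) z :=
  Fintype.linearIndependent_iff.2 fun g hg i => by
    simpa [map_sum, h] using congrArg (fun v => B v (w i)) hg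

namespace IsHyperbolicFamily

variable {z w : ι → V}

local notation "Z" => Submodule.span (LaurentSeries k) (Set.range z)
local notation "W" => Submodule.span (LaurentSeries k) (Set.range w)

lemma isotropic_span_right (h : IsHyperbolicFamily Φ z w) : ∀ x ∈ W, ∀ y ∈ W, Φ x y = 0 :=
  isotropic_span Φ (by rintro _ ⟨i, rfl⟩ _ ⟨j, rfl⟩; exact h.isotropic_right i j)

variable [Fintype ι]

lemma linearIndependent_left (h : IsHyperbolicFamily Φ z w) :
    LinearIndependent (LaurentSeries k) z :=
  linearIndependent_of_apply_eq_ite Φ h.apply_eq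

lemma linearIndependent_right (h : IsHyperbolicFamily Φ z w) :
    LinearIndependent (LaurentSeries k) w :=
  linearIndependent_of_apply_eq_ite Φ.flip (w := z) fun i j => by simp [h.apply_eq, eq_comm]

lemma sum_smul_left_eq_self (h : IsHyperbolicFamily Φ z w) {a : V} (ha : a ∈ Z) :
    ∑ j, Φ a (w j) • z j = a := by
  obtain ⟨c, rfl⟩ := (Submodule.mem_span_range_iff_exists_fun _).1 ha
  simp [map_sum, h.apply_eq]

lemma sum_smul_right_eq_self (h : IsHyperbolicFamily Φ z w) {b : V} (hb : b ∈ W) :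
    ∑ j, Φ (z j) b • w j = b := by
  obtain ⟨c, rfl⟩ := (Submodule.mem_span_range_iff_exists_fun _).1 hb
  simp [map_sum, h.apply_eq]

lemma sub_sum_sub_sum_mem_perpF (h : IsHyperbolicFamily Φ z w) (hΦ : Φ.IsAlt) (x : V) :
    x - ∑ j, Φ x (w j) • z j - ∑ j, Φ (z j) x • w j ∈ perpF Φ (Z ⊔ W) := by
  rw [← Submodule.span_union, mem_perpF_span_iff]
  rintro _ (⟨i, rfl⟩ | ⟨i, rfl⟩)
  · rw [hΦ.eq_iff]
    simp [map_sum, h.isotropic_left, h.apply_eq, mul_comm]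
  · simp [map_sum, h.isotropic_right, h.apply_eq]

lemma eq_zero_of_add_add_eq_zero (h : IsHyperbolicFamily Φ z w) (hΦ : Φ.IsAlt) {a t b : V}
    (ha : a ∈ Z) (ht : t ∈ perpF Φ (Z ⊔ W)) (hb : b ∈ W) (habt : a + t + b = 0) :
    a = 0 ∧ t = 0 ∧ b = 0 := by
  have ha0 : a = 0 := by
    have haw (i) : Φ a (w i) = 0 := by
      have hwi : w i ∈ W := Submodule.subset_span ⟨i, rfl⟩
      simpa [ht _ (Submodule.mem_sup_right hwi), h.isotropic_span_right b hb _ hwi] using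
        congrArg (fun v => Φ v (w i)) habt
    rw [← h.sum_smul_left_eq_self ha]
    simp [haw]
  have hb0 : b = 0 := by
    have hzb (i) : Φ (z i) b = 0 := by
      have hzi : z i ∈ Z := Submodule.subset_span ⟨i, rfl⟩
      simpa [ha0, hΦ.eq_iff.1 (ht _ (Submodule.mem_sup_left hzi))] using congrArg (Φ (z i)) habt
    rw [← h.sum_smul_right_eq_self hb]
    simp [hzb]
  exact ⟨ha0, by simpa [ha0, hb0] using habt, hb0⟩

lemma inf_sup_eq_bot_left (h : IsHyperbolicFamily Φ z w) (hΦ : Φ.IsAlt) :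
    Z ⊓ (perpF Φ (Z ⊔ W) ⊔ W) = ⊥ := by
  refine eq_bot_iff.2 fun x ⟨hx, hx'⟩ => ?_
  obtain ⟨t, ht, b, hb, rfl⟩ := Submodule.mem_sup.1 hx'
  exact (h.eq_zero_of_add_add_eq_zero hΦ hx (neg_mem ht) (neg_mem hb) (by abel)).1

lemma inf_sup_eq_bot_middle (h : IsHyperbolicFamily Φ z w) (hΦ : Φ.IsAlt) :
    perpF Φ (Z ⊔ W) ⊓ (Z ⊔ W) = ⊥ := by
  refine eq_bot_iff.2 fun x ⟨hx, hx'⟩ => ?_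
  obtain ⟨a, ha, b, hb, rfl⟩ := Submodule.mem_sup.1 hx'
  exact neg_eq_zero.1 (h.eq_zero_of_add_add_eq_zero hΦ ha (neg_mem hx) hb (by abel)).2.1

lemma inf_sup_eq_bot_right (h : IsHyperbolicFamily Φ z w) (hΦ : Φ.IsAlt) :
    W ⊓ (Z ⊔ perpF Φ (Z ⊔ W)) = ⊥ := by
  refine eq_bot_iff.2 fun x ⟨hx, hx'⟩ => ?_
  obtain ⟨a, ha, t, ht, rfl⟩ := Submodule.mem_sup.1 hx'
  exact neg_eq_zero.1 (h.eq_zero_of_add_add_eq_zero hΦ ha ht (neg_mem hx) (by abel)).2.2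

lemma sup_perpF_sup_eq_top (h : IsHyperbolicFamily Φ z w) (hΦ : Φ.IsAlt) :
    Z ⊔ perpF Φ (Z ⊔ W) ⊔ W = ⊤ := by
  refine eq_top_iff.2 fun x _ => ?_
  have hx : x = ∑ j, Φ x (w j) • z j + (x - ∑ j, Φ x (w j) • z j - ∑ j, Φ (z j) x • w j) +
      ∑ j, Φ (z j) x • w j := by abel
  rw [hx]
  exact add_mem (add_mem
    (Submodule.mem_sup_left (Submodule.mem_sup_left (Submodule.sum_smul_mem_span_range _ _)))
    (Submodule.mem_sup_left (Submodule.mem_sup_right (h.sub_sum_sub_sum_mem_perpF hΦ x))))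
    (Submodule.mem_sup_right (Submodule.sum_smul_mem_span_range _ _))

lemma perpF_eq_sup (h : IsHyperbolicFamily Φ z w) (hΦ : Φ.IsAlt) :
    perpF Φ Z = Z ⊔ perpF Φ (Z ⊔ W) := by
  refine le_antisymm (fun x hx => ?_) (sup_le ?_ fun t ht y hy => ht y (Submodule.mem_sup_left hy))
  · have hzx (j) : Φ (z j) x = 0 := hΦ.eq_iff.1 (hx _ (Submodule.subset_span ⟨j, rfl⟩))
    have hx' : x = ∑ j, Φ x (w j) • z j + (x - ∑ j, Φ x (w j) • z j - ∑ j, Φ (z j) x • w j) := by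
      simp [hzx]
    rw [hx']
    exact add_mem (Submodule.mem_sup_left (Submodule.sum_smul_mem_span_range _ _))
      (Submodule.mem_sup_right (h.sub_sum_sub_sum_mem_perpF hΦ x))
  · exact fun x hx => (mem_perpF_span_iff Φ).2 fun _ ⟨j, hj⟩ => hj ▸
      isotropic_span Φ (by rintro _ ⟨i, rfl⟩ _ ⟨j, rfl⟩; exact h.isotropic_left i j) x hx _
        (Submodule.subset_span ⟨j, rfl⟩)

end IsHyperbolicFamily

end HyperbolicFamily

variable [Module (PowerSeries k) V]

-- The conditions defining `X^c_{n,d}`, relative to a nondegenerate subspace `U` spanned by every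
-- `L i`, so that they can be passed on to orthogonal complements.
variable (Φ) in
structure IsSelfDualChainOn (n : ℕ) (U : Submodule (LaurentSeries k) V)
    (L : ℤ → Submodule (PowerSeries k) V) : Prop where
  nondegenerate : ∀ v ∈ U, (∀ y ∈ U, Φ v y = 0) → v = 0
  span_eq : ∀ i, Submodule.span (LaurentSeries k) (L i : Set V) = U
  mono : ∀ i, L i ≤ L (i + 1)
  eps_smul_mem_iff : ∀ i v, eps k • v ∈ L i ↔ v ∈ L (i + n)
  dual : ∀ i, ∀ v ∈ U, (∀ x ∈ L i, Φ v x ∈ oring k) ↔ v ∈ L (-i - 1)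

variable {n : ℕ} {U : Submodule (LaurentSeries k) V} {L : ℤ → Submodule (PowerSeries k) V}

namespace IsSelfDualChainOn

lemma mem_of_mem (hL : IsSelfDualChainOn Φ n U L) {i : ℤ} {x : V} (hx : x ∈ L i) : x ∈ U :=
  hL.span_eq i ▸ Submodule.subset_span hx

lemma monotone (hL : IsSelfDualChainOn Φ n U L) : Monotone L :=
  monotone_int_of_le_succ hL.mono

lemma apply_mem_oring (hL : IsSelfDualChainOn Φ n U L) {i : ℤ} {x v : V} (hx : x ∈ L i)
    (hv : v ∈ L (-i - 1)) : Φ v x ∈ oring k :=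
  (hL.dual i v (hL.mem_of_mem hv)).2 hv x hx

lemma eps_zpow_smul_mem_iff (hL : IsSelfDualChainOn Φ n U L) (t i : ℤ) (v : V) :
    eps k ^ t • v ∈ L i ↔ v ∈ L (i + t * n) := by
  induction t using Int.induction_on generalizing i v with
  | zero => simp
  | succ t ih =>
    rw [zpow_add_one₀ eps_ne_zero, mul_smul, ih, hL.eps_smul_mem_iff]
    ring_nf
  | pred t ih =>
    have := hL.eps_smul_mem_iff (i - n) (eps k ^ (-(t : ℤ) - 1) • v)
    rw [smul_smul, ← zpow_one_add₀ eps_ne_zero, sub_add_cancel] at this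
    rw [← this, add_sub_cancel, ih]
    ring_nf

end IsSelfDualChainOn

variable (Φ L) in
structure IsAdaptedDualFamily {ι : Type*} [DecidableEq ι] (V'' : Submodule (LaurentSeries k) V)
    (z w : ι → V) : Prop where
  mem : ∀ j, z j ∈ V''
  apply_eq : ∀ i j, Φ (z i) (w j) = if i = j then 1 else 0
  isotropic : ∀ i j, Φ (w i) (w j) = 0
  smul_left_mem : ∀ i, ∀ x ∈ L i, ∀ j, Φ x (w j) • z j ∈ L i
  smul_right_mem : ∀ i, ∀ x ∈ L i, ∀ j, Φ (z j) x • w j ∈ L i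

lemma IsAdaptedDualFamily.cons (hΦ : Φ.IsAlt) {s : ℕ} {L' : ℤ → Submodule (PowerSeries k) V}
    {V'' V₂ : Submodule (LaurentSeries k) V} {z w : V} {z' w' : Fin s → V}
    (hfam : IsAdaptedDualFamily Φ L' V₂ z' w') (hz : z ∈ V'') (hV₂ : V₂ ≤ V'')
    (hzw : Φ z w = 1) (hpartner : ∀ i, ∀ x ∈ L i, Φ x w • z ∈ L i ∧ Φ z x • w ∈ L i)
    (hL' : ∀ i, L' i ≤ L i) (hρ : ∀ i, ∀ x ∈ L i, perpProj Φ z w x ∈ L' i)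
    (hz' : ∀ j, z' j ∈ perpF Φ (Submodule.span (LaurentSeries k) {z, w}))
    (hw' : ∀ j, w' j ∈ perpF Φ (Submodule.span (LaurentSeries k) {z, w})) :
    IsAdaptedDualFamily Φ L V'' (Fin.cons z z' : Fin (s + 1) → V) (Fin.cons w w') := by
  have hz'w : ∀ j, Φ (z' j) w = 0 := fun j => ((mem_perpF_span_pair Φ).1 (hz' j)).2
  have hzw' : ∀ j, Φ z (w' j) = 0 := fun j => hΦ.eq_iff.1 ((mem_perpF_span_pair Φ).1 (hw' j)).1
  have hww' : ∀ j, Φ w (w' j) = 0 := fun j => hΦ.eq_iff.1 ((mem_perpF_span_pair Φ).1 (hw' j)).2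
  have hw'w : ∀ j, Φ (w' j) w = 0 := fun j => ((mem_perpF_span_pair Φ).1 (hw' j)).2
  refine ⟨Fin.cases hz fun j => hV₂ (hfam.mem j), fun i j => ?_, fun i j => ?_,
    fun i x hx j => ?_, fun i x hx j => ?_⟩
  · cases i using Fin.cases <;> cases j using Fin.cases <;>
      simp [hzw, hz'w, hzw', hfam.apply_eq, (Fin.succ_ne_zero _).symm]
  · cases i using Fin.cases <;> cases j using Fin.cases <;>
      simp [hΦ.self_eq_zero, hww', hw'w, hfam.isotropic]
  · cases j using Fin.cases with
    | zero => exact (hpartner i x hx).1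
    | succ j =>
      simpa [apply_perpProj_left hΦ (hw' j)] using hL' i (hfam.smul_left_mem i _ (hρ i x hx) j)
  · cases j using Fin.cases with
    | zero => exact (hpartner i x hx).2
    | succ j =>
      simpa [apply_perpProj_right (hz' j)] using hL' i (hfam.smul_right_mem i _ (hρ i x hx) j)

lemma IsAdaptedDualFamily.isHyperbolicFamily {ι : Type*} [DecidableEq ι]
    {V'' : Submodule (LaurentSeries k) V} {z w : ι → V} (hfam : IsAdaptedDualFamily Φ L V'' z w)
    (hiso : ∀ x ∈ V'', ∀ y ∈ V'', Φ x y = 0) : IsHyperbolicFamily Φ z w :=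
  ⟨fun i j => hiso _ (hfam.mem i) _ (hfam.mem j), hfam.isotropic, hfam.apply_eq⟩

lemma IsAdaptedDualFamily.span_eq [FiniteDimensional (LaurentSeries k) V] {ι : Type*}
    [Fintype ι] [DecidableEq ι] {V'' : Submodule (LaurentSeries k) V} {z w : ι → V}
    (hfam : IsAdaptedDualFamily Φ L V'' z w)
    (hs : Module.finrank (LaurentSeries k) V'' = Fintype.card ι) :
    Submodule.span (LaurentSeries k) (Set.range z) = V'' :=
  Submodule.eq_of_le_of_finrank_eq (Submodule.span_le.2 (Set.range_subset_iff.2 hfam.mem)) <| by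
    rw [finrank_span_eq_card (linearIndependent_of_apply_eq_ite Φ hfam.apply_eq), hs]

variable [IsScalarTower (PowerSeries k) (LaurentSeries k) V]

lemma smul_mem_of_mem_oring {M : Submodule (PowerSeries k) V} {c : LaurentSeries k}
    (hc : c ∈ oring k) {x : V} (hx : x ∈ M) : c • x ∈ M := by
  obtain ⟨P, rfl⟩ := hc
  rw [algebraMap_smul]
  exact M.smul_mem P hx

lemma eps_zpow_smul_mem_of_le {M : Submodule (PowerSeries k) V} {x : V} {m m' : ℤ}
    (h : m ≤ m') (hx : eps k ^ m • x ∈ M) : eps k ^ m' • x ∈ M := by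
  have := smul_mem_of_mem_oring (eps_zpow_mem_oring (sub_nonneg.2 h)) hx
  rwa [smul_smul, ← zpow_add₀ eps_ne_zero, sub_add_cancel] at this

lemma exists_eps_zpow_smul_mem {M : Submodule (PowerSeries k) V} {x : V}
    (hx : x ∈ Submodule.span (LaurentSeries k) (M : Set V)) : ∃ m : ℤ, eps k ^ m • x ∈ M := by
  induction hx using Submodule.span_induction with
  | mem x hx => exact ⟨0, by simpa using hx⟩
  | zero => exact ⟨0, by simp⟩
  | add x y _ _ hx hy =>
    obtain ⟨m, hm⟩ := hx
    obtain ⟨m', hm'⟩ := hy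
    refine ⟨max m m', ?_⟩
    rw [smul_add]
    exact M.add_mem (eps_zpow_smul_mem_of_le (le_max_left _ _) hm)
      (eps_zpow_smul_mem_of_le (le_max_right _ _) hm')
  | smul c x _ hx =>
    obtain ⟨m, hm⟩ := hx
    obtain ⟨m', hm'⟩ := exists_eps_zpow_mul_mem_oring c
    refine ⟨m' + m, ?_⟩
    rw [zpow_add₀ eps_ne_zero, smul_smul, mul_right_comm, mul_smul]
    exact smul_mem_of_mem_oring hm' hm

lemma exists_greatest_eps_zpow_neg_smul_mem {M : Submodule (PowerSeries k) V} {z : V}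
    (hz : z ∈ Submodule.span (LaurentSeries k) (M : Set V))
    (f : V →ₗ[LaurentSeries k] LaurentSeries k) (hf : ∀ x ∈ M, f x ∈ oring k) (hfz : f z ≠ 0) :
    ∃ a : ℤ, eps k ^ (-a) • z ∈ M ∧ ∀ m : ℤ, eps k ^ (-m) • z ∈ M → m ≤ a := by
  obtain ⟨m, hm⟩ := exists_eps_zpow_smul_mem hz
  refine Int.exists_greatest_of_bdd ⟨-log (Valued.v (f z)), fun m hm => ?_⟩ ⟨-m, by simpa⟩
  have := hf _ hm
  rw [map_smul, smul_eq_mul, eps_zpow_mul_mem_oring_iff hfz] at this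
  omega

lemma exists_mem_apply_eq_one {M : Submodule (PowerSeries k) V}
    (f : V →ₗ[LaurentSeries k] LaurentSeries k)
    (h : ¬ ∀ x ∈ M, (eps k)⁻¹ * f x ∈ oring k) : ∃ x ∈ M, f x = 1 := by
  push Not at h
  obtain ⟨x, hx, hfx⟩ := h
  obtain ⟨hne, hinv⟩ := inv_mem_oring_of_eps_inv_mul_notMem hfx
  exact ⟨(f x)⁻¹ • x, smul_mem_of_mem_oring hinv hx, by simp [hne]⟩

namespace IsSelfDualChainOn

lemma restrict (hL : IsSelfDualChainOn Φ n U L) {U' : Submodule (LaurentSeries k) V}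
    (hU' : U' ≤ U) (ρ : V →ₗ[LaurentSeries k] V) (hρL : ∀ i, ∀ x ∈ L i, ρ x ∈ L i)
    (hρU : ∀ x ∈ U, ρ x ∈ U') (hρ_fix : ∀ x ∈ U', ρ x = x)
    (hΦρ : ∀ v ∈ U', ∀ x ∈ U, Φ v (ρ x) = Φ v x) :
    IsSelfDualChainOn Φ n U' (fun i => L i ⊓ U'.restrictScalars (PowerSeries k)) where
  nondegenerate v hv h :=
    hL.nondegenerate v (hU' hv) fun y hy => hΦρ v hv y hy ▸ h _ (hρU y hy)
  span_eq i := by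
    refine le_antisymm (Submodule.span_le.2 fun x hx => hx.2) fun v hv => ?_
    have : ρ v ∈ (Submodule.span (LaurentSeries k) (L i : Set V)).map ρ :=
      Submodule.mem_map_of_mem (hL.span_eq i ▸ hU' hv)
    rw [Submodule.map_span, hρ_fix v hv] at this
    refine Submodule.span_mono ?_ this
    rintro _ ⟨x, hx, rfl⟩
    exact ⟨hρL i x hx, hρU x (hL.mem_of_mem hx)⟩
  mono i := inf_le_inf_right _ (hL.mono i)
  eps_smul_mem_iff i v := by
    simp only [Submodule.mem_inf, hL.eps_smul_mem_iff, Submodule.restrictScalars_mem,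
      Submodule.smul_mem_iff _ eps_ne_zero]
  dual i v hv := by
    refine ⟨fun h => ⟨(hL.dual i v (hU' hv)).1 fun x hx => ?_, hv⟩,
      fun h x hx => (hL.dual i v (hU' hv)).2 h.1 x hx.1⟩
    rw [← hΦρ v hv x (hL.mem_of_mem hx)]
    exact h _ ⟨hρL i x hx, hρU x (hL.mem_of_mem hx)⟩

lemma exists_greatest_of_ne_zero (hL : IsSelfDualChainOn Φ n U L) (hΦ : Φ.IsAlt) {z : V}
    (hzU : z ∈ U) (hz : z ≠ 0) (i : ℤ) :
    ∃ a : ℤ, eps k ^ (-a) • z ∈ L i ∧ ∀ m : ℤ, eps k ^ (-m) • z ∈ L i → m ≤ a := by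
  obtain ⟨y, hyU, hzy⟩ : ∃ y ∈ U, Φ z y ≠ 0 := by
    by_contra! h
    exact hz (hL.nondegenerate z hzU h)
  obtain ⟨p, hp⟩ := exists_eps_zpow_smul_mem (hL.span_eq (-i - 1) ▸ hyU)
  refine exists_greatest_eps_zpow_neg_smul_mem (hL.span_eq i ▸ hzU) (Φ (eps k ^ p • y))
    (fun x hx => hL.apply_mem_oring hx hp) ?_
  rw [map_smul, LinearMap.smul_apply, ← hΦ.neg]
  simp [zpow_ne_zero _ eps_ne_zero, hzy]

lemma exists_scaled_partner (hL : IsSelfDualChainOn Φ n U L) (hΦ : Φ.IsAlt) (hn : 0 < n)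
    {z : V} (hzU : z ∈ U) (hz : z ≠ 0) :
    ∃ w ∈ U, Φ z w = 1 ∧ ∃ a : ℤ → ℤ,
      (∀ j, eps k ^ (-a j) • z ∈ L j) ∧ ∀ j, eps k ^ a j • w ∈ L (-j - 1) := by
  choose a ha hmax using hL.exists_greatest_of_ne_zero hΦ hzU hz
  have amono : Monotone a := fun i j hij => hmax j _ (hL.monotone hij (ha i))
  have aper : ∀ i t, a (i + t * n) = a i + t := by
    intro i t
    have key : ∀ m, eps k ^ (-m) • z ∈ L (i + t * n) ↔ eps k ^ (-(m - t)) • z ∈ L i := by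
      intro m
      rw [← hL.eps_zpow_smul_mem_iff t, smul_smul, ← zpow_add₀ eps_ne_zero]
      ring_nf
    refine le_antisymm ?_ (hmax _ _ ((key _).2 (by simpa using ha i)))
    linarith [hmax i _ ((key _).1 (ha _))]
  obtain ⟨j₀, hj₀⟩ := exists_forall_sub_le_mul hn amono aper
  -- `z` scaled to be primitive in `L j₀`; its partner comes from `L j₀ = (L (-j₀ - 1))^#`.
  obtain ⟨w₀, hw₀, hzw₀⟩ : ∃ w₀ ∈ L (-j₀ - 1), Φ (eps k ^ (-a j₀) • z) w₀ = 1 := by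
    refine exists_mem_apply_eq_one _ fun h => ?_
    have hmem := (hL.dual (-j₀ - 1) ((eps k)⁻¹ • eps k ^ (-a j₀) • z)
      (U.smul_mem _ (U.smul_mem _ hzU))).1 fun x hx => by simpa using h x hx
    rw [show -(-j₀ - 1) - 1 = j₀ by ring, smul_smul, ← zpow_neg_one, ← zpow_add₀ eps_ne_zero,
      show (-1 + -a j₀) = -(a j₀ + 1) by ring] at hmem
    linarith [hmax j₀ _ hmem]
  refine ⟨eps k ^ (-a j₀) • w₀, U.smul_mem _ (hL.mem_of_mem hw₀), ?_, a, ha, fun j => ?_⟩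
  · rwa [map_smul, smul_eq_mul, ← smul_eq_mul, ← LinearMap.smul_apply, ← map_smul]
  · rw [smul_smul, ← zpow_add₀ eps_ne_zero]
    have := (hL.eps_zpow_smul_mem_iff (a j + -a j₀) (-j₀ - 1 - (a j + -a j₀) * n) w₀).2
      (by rwa [sub_add_cancel])
    exact hL.monotone (by linarith [hj₀ j]) this

lemma exists_partner (hL : IsSelfDualChainOn Φ n U L) (hΦ : Φ.IsAlt) (hn : 0 < n) {z : V}
    (hzU : z ∈ U) (hz : z ≠ 0) :
    ∃ w ∈ U, Φ z w = 1 ∧ ∀ i, ∀ x ∈ L i, Φ x w • z ∈ L i ∧ Φ z x • w ∈ L i := by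
  obtain ⟨w, hwU, hzw, a, haz, haw⟩ := hL.exists_scaled_partner hΦ hn hzU hz
  have hε : ∀ m : ℤ, eps k ^ m ≠ 0 := fun m => zpow_ne_zero m eps_ne_zero
  refine ⟨w, hwU, hzw, fun i x hx => ⟨?_, ?_⟩⟩
  · have hx' : Φ x w • z = -(Φ (eps k ^ a i • w) x • eps k ^ (-a i) • z) := by
      rw [map_smul, LinearMap.smul_apply, smul_smul, smul_eq_mul, ← neg_smul, zpow_neg,
        ← hΦ.neg w x]
      field_simp [hε]
    rw [hx']
    exact neg_mem (smul_mem_of_mem_oring (hL.apply_mem_oring hx (haw i)) (haz i))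
  · have hx' : Φ z x • w = Φ (eps k ^ (-a (-i - 1)) • z) x • eps k ^ a (-i - 1) • w := by
      rw [map_smul, LinearMap.smul_apply, smul_smul, smul_eq_mul, zpow_neg]
      field_simp [hε]
    have hw := haw (-i - 1)
    rw [show -(-i - 1) - 1 = i by ring] at hw
    rw [hx']
    exact smul_mem_of_mem_oring (hL.apply_mem_oring hx (haz (-i - 1))) hw

theorem exists_adaptedDualFamily [FiniteDimensional (LaurentSeries k) V]
    (hL : IsSelfDualChainOn Φ n U L) (hΦ : Φ.IsAlt) (hn : 0 < n) {s : ℕ}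
    {V'' : Submodule (LaurentSeries k) V} (hV'' : V'' ≤ U) (hiso : ∀ x ∈ V'', ∀ y ∈ V'', Φ x y = 0)
    (hs : Module.finrank (LaurentSeries k) V'' = s) :
    ∃ z w : Fin s → V, (∀ j, w j ∈ U) ∧ IsAdaptedDualFamily Φ L V'' z w := by
  induction s generalizing U L V'' with
  | zero =>
    exact ⟨finZeroElim, finZeroElim, finZeroElim, finZeroElim, finZeroElim, finZeroElim,
      fun _ _ _ => finZeroElim, fun _ _ _ => finZeroElim⟩
  | succ s ih =>
    obtain ⟨z, hzV, hz⟩ := Submodule.exists_mem_ne_zero_of_ne_bot (p := V'') <| by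
      rintro rfl
      simp at hs
    obtain ⟨w, hwU, hzw, hpartner⟩ := hL.exists_partner hΦ hn (hV'' hzV) hz
    set P := perpF Φ (Submodule.span (LaurentSeries k) {z, w})
    have hρU : ∀ x ∈ U, perpProj Φ z w x ∈ U ⊓ P := fun x hx =>
      ⟨U.sub_mem (U.sub_mem hx (U.smul_mem _ (hV'' hzV))) (U.smul_mem _ hwU),
        perpProj_mem_perpF hΦ hzw x⟩
    have hρL : ∀ i, ∀ x ∈ L i, perpProj Φ z w x ∈ L i := fun i x hx =>
      (L i).sub_mem ((L i).sub_mem hx (hpartner i x hx).1) (hpartner i x hx).2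
    have hL' := hL.restrict inf_le_left (perpProj Φ z w) hρL hρU
      (fun x hx => perpProj_eq_self hΦ hx.2) (fun v hv x _ => apply_perpProj_right hv.2 x)
    set V₂ := V'' ⊓ LinearMap.ker (Φ.flip w)
    have hV₂ : V₂ ≤ U ⊓ P := fun v hv =>
      ⟨hV'' hv.1, (mem_perpF_span_pair Φ).2 ⟨hiso v hv.1 z hzV, hv.2⟩⟩
    have hs₂ : Module.finrank (LaurentSeries k) V₂ = s := by
      have := Submodule.finrank_inf_ker_add_one (f := Φ.flip w) hzV (by simp [hzw])
      exact Nat.add_right_cancel (this.trans hs)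
    obtain ⟨z', w', hw'U, hfam⟩ := ih hL' hV₂ (fun x hx y hy => hiso x hx.1 y hy.1) hs₂
    exact ⟨_, _, Fin.cases hwU fun j => (hw'U j).1,
      hfam.cons hΦ hzV inf_le_left hzw hpartner (fun i => inf_le_left)
        (fun i x hx => ⟨hρL i x hx, hρU x (hL.mem_of_mem hx)⟩)
        (fun j => (hV₂ (hfam.mem j)).2) (fun j => (hw'U j).2)⟩

end IsSelfDualChainOn

lemma IsAdaptedDualFamily.eq_sup_inf {ι : Type*} [Fintype ι] [DecidableEq ι]
    {V'' : Submodule (LaurentSeries k) V} {z w : ι → V} (hfam : IsAdaptedDualFamily Φ L V'' z w)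
    (h : IsHyperbolicFamily Φ z w) (hΦ : Φ.IsAlt) (i : ℤ) :
    L i = (L i ⊓ (Submodule.span (LaurentSeries k) (Set.range z)).restrictScalars _)
      ⊔ (L i ⊓ (perpF Φ (Submodule.span (LaurentSeries k) (Set.range z) ⊔
          Submodule.span (LaurentSeries k) (Set.range w))).restrictScalars _)
      ⊔ (L i ⊓ (Submodule.span (LaurentSeries k) (Set.range w)).restrictScalars _) := by
  refine le_antisymm (fun x hx => ?_) (sup_le (sup_le inf_le_left inf_le_left) inf_le_left)
  have hleft : ∑ j, Φ x (w j) • z j ∈ L i := sum_mem fun j _ => hfam.smul_left_mem i x hx j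
  have hright : ∑ j, Φ (z j) x • w j ∈ L i := sum_mem fun j _ => hfam.smul_right_mem i x hx j
  have hx' : x = ∑ j, Φ x (w j) • z j + (x - ∑ j, Φ x (w j) • z j - ∑ j, Φ (z j) x • w j) +
      ∑ j, Φ (z j) x • w j := by abel
  rw [hx']
  exact add_mem (add_mem
    (Submodule.mem_sup_left (Submodule.mem_sup_left
      ⟨hleft, Submodule.sum_smul_mem_span_range _ _⟩))
    (Submodule.mem_sup_left (Submodule.mem_sup_right
      ⟨sub_mem (sub_mem hx hleft) hright, h.sub_sum_sub_sum_mem_perpF hΦ x⟩)))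
    (Submodule.mem_sup_right ⟨hright, Submodule.sum_smul_mem_span_range _ _⟩)

lemma IsXc.isSelfDualChainOn (hnondeg : ∀ v : V, (∀ w : V, Φ v w = 0) → v = 0) (hL : IsXc Φ n L) :
    IsSelfDualChainOn Φ n ⊤ L where
  nondegenerate v _ h := hnondeg v fun y => h y trivial
  span_eq i := (hL.1 i).2
  mono := hL.2.1
  eps_smul_mem_iff i v := by
    rw [hL.2.2.1 i]
    simp only [smul_right_inj eps_ne_zero, exists_eq_right']
  dual i v _ := by
    rw [← hL.2.2.2 i]
    rfl

end AffLat

open AffLat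

theorem statement9_general {k : Type*} [Field k]
    {V : Type*} [AddCommGroup V] [Module (LaurentSeries k) V]
    [Module (PowerSeries k) V] [IsScalarTower (PowerSeries k) (LaurentSeries k) V]
    [FiniteDimensional (LaurentSeries k) V]
    (r : ℕ)
    (Φ : V →ₗ[LaurentSeries k] V →ₗ[LaurentSeries k] LaurentSeries k)
    (halt : ∀ v : V, Φ v v = 0)
    (hnondeg : ∀ v : V, (∀ w : V, Φ v w = 0) → v = 0)
    (V'' : Submodule (LaurentSeries k) V)
    (hiso : ∀ x ∈ V'', ∀ y ∈ V'', Φ x y = 0)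
    (s : ℕ) (hs : Module.finrank (LaurentSeries k) V'' = s)
    (L : ℤ → Submodule (PowerSeries k) V) (hL : IsXc Φ (2 * r + 2) L) :
    ∃ T W : Submodule (LaurentSeries k) V,
      -- (1) `V = V″ ⊕ T ⊕ W` and `(V″)^⊥ = V″ ⊕ T`
      (V'' ⊓ (T ⊔ W) = ⊥ ∧ T ⊓ (V'' ⊔ W) = ⊥ ∧ W ⊓ (V'' ⊔ T) = ⊥ ∧ V'' ⊔ T ⊔ W = ⊤) ∧
      perpF Φ V'' = V'' ⊔ T ∧
      -- (2) `W` is isotropic and `(T, W) = 0`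
      (∀ x ∈ W, ∀ y ∈ W, Φ x y = 0) ∧
      (∀ x ∈ T, ∀ y ∈ W, Φ x y = 0) ∧
      -- (3) dual bases of `V″` and `W`
      (∃ (z : Module.Basis (Fin s) (LaurentSeries k) V'') (w : Module.Basis (Fin s) (LaurentSeries k) W),
        ∀ i j : Fin s, Φ (z i : V) (w j : V) = if i = j then 1 else 0) ∧
      -- (4) `L_i = (L_i ∩ V″) ⊕ (L_i ∩ T) ⊕ (L_i ∩ W)` for all `i`
      (∀ i : ℤ,
        L i = (L i ⊓ V''.restrictScalars (PowerSeries k))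
            ⊔ (L i ⊓ T.restrictScalars (PowerSeries k))
            ⊔ (L i ⊓ W.restrictScalars (PowerSeries k))) := by
  obtain ⟨z, w, -, hfam⟩ :=
    (hL.isSelfDualChainOn hnondeg).exists_adaptedDualFamily halt (Nat.succ_pos _) le_top hiso hs
  have h := hfam.isHyperbolicFamily hiso
  obtain rfl := hfam.span_eq (by simpa using hs)
  refine ⟨_, _, ⟨h.inf_sup_eq_bot_left halt, h.inf_sup_eq_bot_middle halt,
    h.inf_sup_eq_bot_right halt, h.sup_perpF_sup_eq_top halt⟩, h.perpF_eq_sup halt,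
    h.isotropic_span_right, fun x hx y hy => hx y (Submodule.mem_sup_right hy),
    ⟨Module.Basis.span h.linearIndependent_left, Module.Basis.span h.linearIndependent_right,
      fun i j => by simp [Module.Basis.span_apply, h.apply_eq]⟩, hfam.eq_sup_inf h halt⟩

/-- Let `V″` be an isotropic `F`-subspace of `V` of dimension `s` and let
`L ∈ X^c_{n,d}`.  Then there exist `F`-subspaces `T`, `W` of `V` such that
(1) `V = V″ ⊕ T ⊕ W` and `(V″)^⊥ = V″ ⊕ T`;
(2) `W` is isotropic and `(T, W) = 0`;
(3) there are bases `(z_i)` of `V″` and `(w_j)` of `W` with `(z_i, w_j) = δ_{ij}`;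
(4) `L_i = (L_i ∩ V″) ⊕ (L_i ∩ T) ⊕ (L_i ∩ W)` for all `i ∈ ℤ`. -/
theorem statement9 {k : Type*} [Field k] [Fintype k] (hodd : Odd (Fintype.card k))
    {V : Type*} [AddCommGroup V] [Module (LaurentSeries k) V]
    [Module (PowerSeries k) V] [IsScalarTower (PowerSeries k) (LaurentSeries k) V]
    [FiniteDimensional (LaurentSeries k) V]
    (r d : ℕ)
    (hdim : Module.finrank (LaurentSeries k) V = 2 * d)
    (Φ : V →ₗ[LaurentSeries k] V →ₗ[LaurentSeries k] LaurentSeries k)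
    (halt : ∀ v : V, Φ v v = 0)
    (hnondeg : ∀ v : V, (∀ w : V, Φ v w = 0) → v = 0)
    (V'' : Submodule (LaurentSeries k) V)
    (hiso : ∀ x ∈ V'', ∀ y ∈ V'', Φ x y = 0)
    (s : ℕ) (hs : Module.finrank (LaurentSeries k) V'' = s)
    (L : ℤ → Submodule (PowerSeries k) V) (hL : IsXc Φ (2 * r + 2) L) :
    ∃ T W : Submodule (LaurentSeries k) V,
      -- (1) `V = V″ ⊕ T ⊕ W` and `(V″)^⊥ = V″ ⊕ T`
      (V'' ⊓ (T ⊔ W) = ⊥ ∧ T ⊓ (V'' ⊔ W) = ⊥ ∧ W ⊓ (V'' ⊔ T) = ⊥ ∧ V'' ⊔ T ⊔ W = ⊤) ∧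
      perpF Φ V'' = V'' ⊔ T ∧
      -- (2) `W` is isotropic and `(T, W) = 0`
      (∀ x ∈ W, ∀ y ∈ W, Φ x y = 0) ∧
      (∀ x ∈ T, ∀ y ∈ W, Φ x y = 0) ∧
      -- (3) dual bases of `V″` and `W`
      (∃ (z : Module.Basis (Fin s) (LaurentSeries k) V'') (w : Module.Basis (Fin s) (LaurentSeries k) W),
        ∀ i j : Fin s, Φ (z i : V) (w j : V) = if i = j then 1 else 0) ∧
      -- (4) `L_i = (L_i ∩ V″) ⊕ (L_i ∩ T) ⊕ (L_i ∩ W)` for all `i`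
      (∀ i : ℤ,
        L i = (L i ⊓ V''.restrictScalars (PowerSeries k))
            ⊔ (L i ⊓ T.restrictScalars (PowerSeries k))
            ⊔ (L i ⊓ W.restrictScalars (PowerSeries k))) :=
  statement9_general r Φ halt hnondeg V'' hiso s hs L hL
end
end

section
/- For A ∈ Ξ_{n,d} and 0 ≤ i ≤ r, define ε_i(A) = Σ_{(s,t): s ≤ i < t} a_{st} − Σ_{(s,t): s > i ≥ t} a_{st} (both sums have finitely many nonzero terms). Then ε_i(A) = (1/2)·Σ_{s=−i}^{i} ( ro(A)_s − co(A)_s ). -/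
/-
`ε_i(A)` is the net flow of `A` across the cut between `i` and `i + 1`. Periodicity, together
with the finiteness of the entries in one period of rows, makes `A` banded, so all sums involved
are finite, and the flows across two cuts differ by the row-minus-column sums in between:
`ε_i - ε_j = Σ_{j < s ≤ i} (ro(A)_s - co(A)_s)`. The central symmetry `a_{st} = a_{-s,-t}`
reverses every flow, `ε_{-i-1} = -ε_i`, and taking `j = -i - 1` gives the claim.
-/

open scoped Classical

noncomputable section

namespace AffMat

/-- Row sum `ro(A)_i = Σ_j a_{ij}`. -/
def ro (A : ℤ → ℤ → ℕ) (i : ℤ) : ℕ := ∑ᶠ j : ℤ, A i j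

/-- Column sum `co(A)_j = Σ_i a_{ij}`. -/
def co (A : ℤ → ℤ → ℕ) (j : ℤ) : ℕ := ∑ᶠ i : ℤ, A i j

/-- Membership in `Ξ_{n,d}` (with `n = 2r+2`). -/
def MemXi (r d : ℕ) (A : ℤ → ℤ → ℕ) : Prop :=
  (∀ i j : ℤ, A i j = A (-i) (-j)) ∧
  (∀ i j : ℤ, A i j = A (i - (2 * r + 2)) (j - (2 * r + 2))) ∧
  Odd (A 0 0) ∧ Odd (A ((r : ℤ) + 1) ((r : ℤ) + 1)) ∧
  (∑ᶠ j : ℤ, ∑ i ∈ Finset.Icc (1 : ℤ) (2 * r + 2), A i j) = 2 * d + 2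

/-- `ε_i(A) = Σ_{s ≤ i < t} a_{st} - Σ_{s > i ≥ t} a_{st}`. -/
def epsI (A : ℤ → ℤ → ℕ) (i : ℤ) : ℤ :=
  (∑ᶠ s : ℤ, ∑ᶠ t : ℤ, if s ≤ i ∧ i < t then ((A s t : ℕ) : ℤ) else 0)
  - (∑ᶠ s : ℤ, ∑ᶠ t : ℤ, if i < s ∧ t ≤ i then ((A s t : ℕ) : ℤ) else 0)

end AffMat

open AffMat

namespace AffMat

theorem finsum_finsum_eq_sum_sum {α β M : Type*} [AddCommMonoid M] {f : α → β → M}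
    (S : Finset α) (T : Finset β) (h : ∀ a b, f a b ≠ 0 → a ∈ S ∧ b ∈ T) :
    ∑ᶠ a, ∑ᶠ b, f a b = ∑ a ∈ S, ∑ b ∈ T, f a b := by
  have inner (a : α) : ∑ᶠ b, f a b = ∑ b ∈ T, f a b :=
    finsum_eq_sum_of_support_subset _ fun b hb => (h a b hb).2
  rw [finsum_congr inner]
  refine finsum_eq_sum_of_support_subset _ fun a ha => ?_
  obtain ⟨b, -, hb⟩ := Finset.exists_ne_zero_of_sum_ne_zero ha
  exact (h a b hb).1

theorem finsum_finsum_comp_neg {α M : Type*} [InvolutiveNeg α] [AddCommMonoid M]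
    (f : α → α → M) : ∑ᶠ a, ∑ᶠ b, f (-a) (-b) = ∑ᶠ a, ∑ᶠ b, f a b :=
  calc ∑ᶠ a, ∑ᶠ b, f (-a) (-b) = ∑ᶠ a, ∑ᶠ b, f (-a) b :=
        finsum_congr fun a => finsum_comp_equiv (Equiv.neg α) (f := f (-a))
    _ = ∑ᶠ a, ∑ᶠ b, f a b := finsum_comp_equiv (Equiv.neg α) (f := fun a => ∑ᶠ b, f a b)

variable {A : ℤ → ℤ → ℕ}

theorem epsI_neg_sub_one (hsym : ∀ s t, A s t = A (-s) (-t)) (i : ℤ) :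
    epsI A (-i - 1) = -epsI A i := by
  have hcut : ∀ s t : ℤ, (-s ≤ -i - 1 ∧ -i - 1 < -t ↔ i < s ∧ t ≤ i) ∧
      (-i - 1 < -s ∧ -t ≤ -i - 1 ↔ s ≤ i ∧ i < t) := fun s t => by omega
  unfold epsI
  rw [← finsum_finsum_comp_neg, ← finsum_finsum_comp_neg
    (fun s t => if -i - 1 < s ∧ t ≤ -i - 1 then ((A s t : ℕ) : ℤ) else 0)]
  simp only [← hsym, hcut, neg_sub]

/-- The sign with which `a_{st}` enters `ε_i`: whether the step `s → t` crosses the cut between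
`i` and `i + 1` upwards or downwards. -/
def crossing (i s t : ℤ) : ℤ :=
  (if s ≤ i ∧ i < t then 1 else 0) - (if i < s ∧ t ≤ i then 1 else 0)

theorem crossing_sub_crossing {i j : ℤ} (hji : j ≤ i) (s t : ℤ) :
    crossing i s t - crossing j s t =
      (if s ∈ Finset.Ioc j i then 1 else 0) - (if t ∈ Finset.Ioc j i then 1 else 0) := by
  simp only [crossing, Finset.mem_Ioc]
  split_ifs <;> omega

def IsBanded (A : ℤ → ℤ → ℕ) (M : ℕ) : Prop :=
  ∀ s t, A s t ≠ 0 → |s - t| ≤ M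

namespace IsBanded

variable {M : ℕ}

theorem mem_Icc_of_ne_zero (hband : IsBanded A M) {s t : ℤ}
    (h : A s t ≠ 0) : t ∈ Finset.Icc (s - M) (s + M) ∧ s ∈ Finset.Icc (t - M) (t + M) := by
  have := abs_le.mp (hband s t h)
  simp only [Finset.mem_Icc]
  omega

theorem ro_eq_sum (hband : IsBanded A M) {s : ℤ} {B : Finset ℤ}
    (hB : Finset.Icc (s - M) (s + M) ⊆ B) :
    ro A s = ∑ t ∈ B, A s t :=
  finsum_eq_sum_of_support_subset _ fun _ ht => hB (hband.mem_Icc_of_ne_zero ht).1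

theorem co_eq_sum (hband : IsBanded A M) {t : ℤ} {B : Finset ℤ}
    (hB : Finset.Icc (t - M) (t + M) ⊆ B) :
    co A t = ∑ s ∈ B, A s t :=
  finsum_eq_sum_of_support_subset _ fun _ hs => hB (hband.mem_Icc_of_ne_zero hs).2

theorem epsI_eq_sum_crossing (hband : IsBanded A M) {i : ℤ} {B : Finset ℤ}
    (hB : Finset.Icc (i - M) (i + M) ⊆ B) :
    epsI A i = ∑ s ∈ B, ∑ t ∈ B, (A s t : ℤ) * crossing i s t := by
  have hmem (s t : ℤ) (p : Prop) [Decidable p] (hp : p → s ≤ i ∧ i < t ∨ i < s ∧ t ≤ i)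
      (h : (if p then (A s t : ℤ) else 0) ≠ 0) : s ∈ B ∧ t ∈ B := by
    obtain ⟨hc, hA⟩ := ite_ne_right_iff.mp h
    have := abs_le.mp (hband s t (by exact_mod_cast hA))
    have := hp hc
    constructor <;> apply hB <;> simp only [Finset.mem_Icc] <;> omega
  unfold epsI
  rw [finsum_finsum_eq_sum_sum B B fun s t => hmem s t _ Or.inl,
    finsum_finsum_eq_sum_sum B B fun s t => hmem s t _ Or.inr, ← Finset.sum_sub_distrib]
  refine Finset.sum_congr rfl fun s _ => ?_
  rw [← Finset.sum_sub_distrib]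
  refine Finset.sum_congr rfl fun t _ => ?_
  simp only [crossing]
  split_ifs <;> simp

theorem epsI_sub_epsI (hband : IsBanded A M) {i j : ℤ} (hji : j ≤ i) :
    epsI A i - epsI A j = ∑ s ∈ Finset.Ioc j i, ((ro A s : ℤ) - co A s) := by
  set B := Finset.Icc (j - M) (i + M)
  have hI : Finset.Ioc j i ⊆ B := fun s hs => by
    simp only [B, Finset.mem_Ioc, Finset.mem_Icc] at hs ⊢; omega
  rw [hband.epsI_eq_sum_crossing (B := B) (Finset.Icc_subset_Icc (by omega) (by omega)),
    hband.epsI_eq_sum_crossing (B := B) (Finset.Icc_subset_Icc (by omega) (by omega))]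
  simp_rw [← Finset.sum_sub_distrib, ← mul_sub, crossing_sub_crossing hji, mul_sub, mul_ite,
    mul_one, mul_zero, Finset.sum_sub_distrib]
  rw [Finset.sum_comm (s := B) (t := B) (f := fun s t => if t ∈ Finset.Ioc j i then _ else _)]
  simp only [Finset.sum_ite_irrel, Finset.sum_const_zero, Finset.sum_ite_mem,
    Finset.inter_eq_right.mpr hI]
  congr 1 <;> refine Finset.sum_congr rfl fun s hs => ?_ <;>
    obtain ⟨hjs, hsi⟩ := Finset.mem_Ioc.mp hs
  · rw [hband.ro_eq_sum (B := B) (Finset.Icc_subset_Icc (by omega) (by omega))]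
    push_cast; rfl
  · rw [hband.co_eq_sum (B := B) (Finset.Icc_subset_Icc (by omega) (by omega))]
    push_cast; rfl

end IsBanded

theorem exists_isBanded_of_periodic {n : ℤ} (hn : 0 < n)
    (hper : ∀ s t, A s t = A (s - n) (t - n))
    (hfin : (Function.support fun t => ∑ s ∈ Finset.Icc 1 n, A s t).Finite) :
    ∃ M, IsBanded A M := by
  obtain ⟨K, hK⟩ := (hfin.image (|·|)).bddAbove
  have hP : Function.Periodic (fun p : ℤ × ℤ => A p.1 p.2) (n, n) := fun p => by
    simp [hper (p.1 + n) (p.2 + n)]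
  refine ⟨(n + K).toNat, fun s t hst => ?_⟩
  set q := toIcoDiv hn 1 s
  obtain ⟨hlo, hhi⟩ : s - q • n ∈ Set.Ico 1 (1 + n) :=
    self_sub_toIcoDiv_zsmul hn 1 s ▸ toIcoMod_mem_Ico hn 1 s
  have hshift : A (s - q • n) (t - q • n) ≠ 0 := by
    simpa using (hP.sub_zsmul_eq q (x := (s, t))).symm ▸ hst
  have hcol : t - q • n ∈ Function.support fun t => ∑ s ∈ Finset.Icc 1 n, A s t :=
    fun h => hshift (Finset.sum_eq_zero_iff.mp h _ (Finset.mem_Icc.mpr ⟨hlo, by linarith⟩))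
  obtain ⟨hKlo, hKhi⟩ := abs_le.mp (hK ⟨_, hcol, rfl⟩)
  rw [abs_le]
  constructor <;> linarith [Int.self_le_toNat (n + K)]

end AffMat

theorem statement15_general (r d : ℕ) (A : ℤ → ℤ → ℕ) (hA : MemXi r d A)
    (i : ℕ) :
    (epsI A (i : ℤ) : ℚ) =
      (1 / 2) * ∑ s ∈ Finset.Icc (-(i : ℤ)) (i : ℤ), ((ro A s : ℚ) - (co A s : ℚ)) := by
  obtain ⟨hsym, hper, -, -, hsum⟩ := hA
  have hfin : (Function.support fun t => ∑ s ∈ Finset.Icc (1 : ℤ) (2 * r + 2), A s t).Finite := by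
    by_contra h
    rw [finsum_of_infinite_support h] at hsum
    omega
  obtain ⟨M, hband⟩ := exists_isBanded_of_periodic (by positivity) hper hfin
  have hflow := hband.epsI_sub_epsI (show -(i : ℤ) - 1 ≤ i by omega)
  rw [epsI_neg_sub_one hsym, show Finset.Ioc (-(i : ℤ) - 1) i = Finset.Icc (-(i : ℤ)) i by
    ext; simp only [Finset.mem_Ioc, Finset.mem_Icc]; omega] at hflow
  have hflowQ := congrArg (Int.cast : ℤ → ℚ) hflow
  push_cast at hflowQ
  linarith

/-- For `A ∈ Ξ_{n,d}` and `0 ≤ i ≤ r`,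
`ε_i(A) = ½ Σ_{s=-i}^{i} (ro(A)_s - co(A)_s)`. -/
theorem statement15 (r d : ℕ) (hd : 1 ≤ d) (A : ℤ → ℤ → ℕ) (hA : MemXi r d A)
    (i : ℕ) (hi : i ≤ r) :
    (epsI A (i : ℤ) : ℚ) =
      (1 / 2) * ∑ s ∈ Finset.Icc (-(i : ℤ)) (i : ℤ), ((ro A s : ℚ) - (co A s : ℚ)) :=
  statement15_general r d A hA i
end
end
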